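/- Let n ≥ 1 and let the vectors ⟨η_a : a ∈ w⟩ ⌢ ⟨ρ_{i,a,b} : i < 2, a < b in w⟩ be linearly independent in (𝔽₂)ⁿ, and set gᵢ(a,b) = η_a + ρ_{i,a,b}, gᵢ(b,a) = η_b + ρ_{i,a,b} for a < b in w and i < 2 (with ρ_{i,b,a} := ρ_{i,a,b}). Suppose U ⊆ (𝔽₂)ⁿ with |U| ≥ 5 is such that for every pair of distinct η, ν ∈ U there exist ν⁰, ν¹, μ⁰, μ¹ in the set G = {gᵢ(a,b), gᵢ(b,a) : i<2, a<b in w}, pairwise distinct, with ν⁰ + ν¹ = μ⁰ + μ¹ = η + ν. Then for all distinct η, ν ∈ U there are a, b ∈ w with η + ν = η_a + η_b. -/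

import Mathlib

/-!
Write the elements of `G` as `η_c + ρ_p`. Since the `η`'s and the `ρ`'s span independent
subspaces, an identity `ν⁰ + ν¹ = μ⁰ + μ¹` in `G` splits into one among the `η`'s and one among
the `ρ`'s, and over `𝔽₂` a relation `v_a + v_b = v_c + v_d` between independent vectors forces
`{a, b} = {c, d}`. Hence every sum of two distinct elements of `U` is `η_a + η_b`,
`σ = ρ_{0,a,b} + ρ_{1,a,b}` or `η_a + η_b + σ` for some `a < b` in `w`.

If `x + y` is of one of the last two kinds, let `χ` and `Θ` be the coordinate functionals of
`ρ_{0,a,b}` and of `η_a`. The sums `u + t` with `χ (u + t) = 1` are then `σ` or `η_a + η_b + σ`,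
and `u ↦ (χ u, Θ u)` is injective on `U`: if `u ≠ t` had the same image, some `t₀ ∈ U` has
`χ (u + t₀) = χ (t + t₀) = 1`, so `u + t = (u + t₀) + (t + t₀)` is `0` or `η_a + η_b`, while
`Θ (u + t) = 0`. Thus `|U| ≤ 4`.
-/

open Submodule Finset

theorem LinearIndependent.exists_dual_apply_eq_ite {K V ι : Type*} [Field K] [AddCommGroup V]
    [Module K V] [DecidableEq ι] {v : ι → V} (hv : LinearIndependent K v) (i : ι) :
    ∃ f : Module.Dual K V, ∀ j, f (v j) = if j = i then 1 else 0 := by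
  obtain ⟨f, hf⟩ := LinearMap.exists_extend ((Module.Basis.span hv).coord i)
  refine ⟨f, fun j => ?_⟩
  have hj : v j = (span K (Set.range v)).subtype (Module.Basis.span hv j) := by simp
  rw [hj, ← LinearMap.comp_apply, hf, Module.Basis.coord_apply, Module.Basis.repr_self,
    Finsupp.single_apply]

theorem Submodule.eq_and_eq_of_add_eq_add {R M : Type*} [Ring R] [AddCommGroup M] [Module R M]
    {p q : Submodule R M} (hpq : Disjoint p q) {x x' y y' : M} (hx : x ∈ p) (hx' : x' ∈ p)
    (hy : y ∈ q) (hy' : y' ∈ q) (h : x + y = x' + y') : x = x' ∧ y = y' := by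
  have hxx' : x - x' = 0 := disjoint_def'.1 hpq _ (sub_mem hx hx') _ (sub_mem hy' hy)
    (by rw [sub_eq_sub_iff_add_eq_add, h, add_comm])
  rw [sub_eq_zero] at hxx'
  exact ⟨hxx', by rwa [hxx', add_right_inj] at h⟩

variable {V : Type*} [AddCommGroup V] [Module (ZMod 2) V]

theorem LinearIndepOn.eq_and_eq_of_add_eq_add {ι : Type*} {v : ι → V} {s : Set ι}
    (hv : LinearIndepOn (ZMod 2) v s) {a b c d : ι} (ha : a ∈ s) (hb : b ∈ s) (hc : c ∈ s)
    (hd : d ∈ s) (h : v a + v b = v c + v d) :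
    (a = b ∧ c = d) ∨ (a = c ∧ b = d) ∨ (a = d ∧ b = c) := by
  classical
  set l : ι →₀ ZMod 2 := .single a 1 + .single b 1 + .single c 1 + .single d 1
  have hl : l = 0 := by
    refine linearIndepOn_iff.1 hv l ?_ ?_
    · refine add_mem (add_mem (add_mem ?_ ?_) ?_) ?_ <;>
        exact Finsupp.single_mem_supported _ _ ‹_›
    · simp only [l, map_add, Finsupp.linearCombination_single, one_smul]
      rw [add_assoc (v a + v b), h, ZModModule.add_self]
  have ka := DFunLike.congr_fun hl a
  have kb := DFunLike.congr_fun hl b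
  have kc := DFunLike.congr_fun hl c
  simp only [l, Finsupp.add_apply, Finsupp.single_apply, Finsupp.coe_zero, Pi.zero_apply]
    at ka kb kc
  grind

theorem card_le_four_of_add_eq_or_eq (χ Θ : Module.Dual (ZMod 2) V) {U : Finset V} {σ τ : V}
    (hτ : Θ τ = 1) (hU : ∀ u ∈ U, ∀ t ∈ U, u ≠ t → χ (u + t) = 1 → u + t = σ ∨ u + t = τ + σ)
    {x y : V} (hx : x ∈ U) (hy : y ∈ U) (hxy : χ (x + y) = 1) : #U ≤ 4 := by
  have hinj : Set.InjOn (fun u => (χ u, Θ u)) U := by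
    intro u hu t ht hut
    simp only [Prod.mk.injEq] at hut
    by_contra hne
    obtain ⟨t₀, ht₀, hχ₀⟩ : ∃ t₀ ∈ U, χ (u + t₀) = 1 := by
      have h := ZModModule.add_add_add_cancel x u y
      apply_fun χ at h
      rw [map_add, hxy] at h
      rcases (by decide : ∀ r s : ZMod 2, r + s = 1 → r = 1 ∨ s = 1) _ _ h with h | h
      · exact ⟨x, hx, by rwa [add_comm]⟩
      · exact ⟨y, hy, h⟩
    have hχ₁ : χ (t + t₀) = 1 := by rwa [map_add, ← hut.1, ← map_add]
    have hne₀ {v : V} (hv : χ (v + t₀) = 1) : v ≠ t₀ := by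
      rintro rfl
      simp [ZModModule.add_self] at hv
    have hΘ : Θ (u + t) = 0 := by rw [map_add, hut.2, ZModModule.add_self]
    have hsum : u + t = (u + t₀) + (t + t₀) := by
      rw [add_comm t, ZModModule.add_add_add_cancel]
    rcases hU u hu t₀ ht₀ (hne₀ hχ₀) hχ₀ with h₁ | h₁ <;>
      rcases hU t ht t₀ ht₀ (hne₀ hχ₁) hχ₁ with h₂ | h₂
    · exact hne (add_right_cancel (h₁.trans h₂.symm))
    · rw [hsum, h₁, h₂, add_left_comm, ZModModule.add_self, add_zero, hτ] at hΘ
      exact one_ne_zero hΘ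
    · rw [hsum, h₁, h₂, add_assoc, ZModModule.add_self, add_zero, hτ] at hΘ
      exact one_ne_zero hΘ
    · exact hne (add_right_cancel (h₁.trans h₂.symm))
  calc #U ≤ #(univ : Finset (ZMod 2 × ZMod 2)) :=
        card_le_card_of_injOn _ (fun _ _ => mem_univ _) hinj
    _ = 4 := rfl

def labelledPairs (w : Finset ℕ) : Set (ℕ × ℕ × ℕ) :=
  {p | p.1 < 2 ∧ p.2.1 ∈ w ∧ p.2.2 ∈ w ∧ p.2.1 < p.2.2}

theorem mem_of_mem_labelledPairs {w : Finset ℕ} {p : ℕ × ℕ × ℕ} {c : ℕ}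
    (hp : p ∈ labelledPairs w) (hc : c = p.2.1 ∨ c = p.2.2) : c ∈ w := by
  rcases hc with rfl | rfl
  exacts [hp.2.1, hp.2.2.1]

section Classification

variable {w : Finset ℕ} {η : ℕ → V} {ρ : ℕ × ℕ × ℕ → V}

variable (w η ρ) in
/-- The set `G` of the `gᵢ(a,b) = η_a + ρ_{i,a,b}` and `gᵢ(b,a) = η_b + ρ_{i,a,b}`. -/
def gSet : Set V :=
  {z | ∃ c p, p ∈ labelledPairs w ∧ (c = p.2.1 ∨ c = p.2.2) ∧ z = η c + ρ p}

variable (w η ρ) in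
/-- The two kinds of sums that the parity argument rules out. -/
def IsExceptionalSum (a b : ℕ) (s : V) : Prop :=
  (0, a, b) ∈ labelledPairs w ∧
    (s = ρ (0, a, b) + ρ (1, a, b) ∨ s = η a + η b + (ρ (0, a, b) + ρ (1, a, b)))

theorem isExceptionalSum_of_add_eq_add (hη : LinearIndepOn (ZMod 2) η w)
    {c₀ c₁ d₀ d₁ : ℕ} {p₀ p₁ : ℕ × ℕ × ℕ} (hp₀ : p₀ ∈ labelledPairs w)
    (hp₁ : p₁ ∈ labelledPairs w) (hp : p₀ ≠ p₁)
    (hc₀ : c₀ = p₀.2.1 ∨ c₀ = p₀.2.2) (hd₀ : d₀ = p₀.2.1 ∨ d₀ = p₀.2.2)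
    (hc₁ : c₁ = p₁.2.1 ∨ c₁ = p₁.2.2) (hd₁ : d₁ = p₁.2.1 ∨ d₁ = p₁.2.2)
    (hcd : c₀ ≠ d₀) (h : η c₀ + η c₁ = η d₀ + η d₁) :
    ∃ a b, IsExceptionalSum w η ρ a b (η c₀ + ρ p₀ + (η c₁ + ρ p₁)) := by
  have hpair := hη.eq_and_eq_of_add_eq_add (mem_of_mem_labelledPairs hp₀ hc₀)
    (mem_of_mem_labelledPairs hp₁ hc₁) (mem_of_mem_labelledPairs hp₀ hd₀)
    (mem_of_mem_labelledPairs hp₁ hd₁) h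
  obtain ⟨i₀, a, b⟩ := p₀
  obtain ⟨i₁, a₁, b₁⟩ := p₁
  obtain ⟨hi₀, ha, hb, hab⟩ := hp₀
  obtain ⟨hi₁, ha₁, hb₁, hab₁⟩ := hp₁
  dsimp only at hc₀ hd₀ hc₁ hd₁ hi₀ hi₁ ha hb ha₁ hb₁ hab hab₁ hpair
  -- `hpair` matches the endpoints `{c₀, d₀}` of `p₀` with the endpoints `{c₁, d₁}` of `p₁`.
  obtain ⟨rfl, rfl⟩ : a = a₁ ∧ b = b₁ := by omega
  have hρ : ρ (i₀, a, b) + ρ (i₁, a, b) = ρ (0, a, b) + ρ (1, a, b) := by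
    obtain ⟨rfl, rfl⟩ | ⟨rfl, rfl⟩ : (i₀ = 0 ∧ i₁ = 1) ∨ (i₀ = 1 ∧ i₁ = 0) := by
      simp only [ne_eq, Prod.mk.injEq, and_true] at hp
      omega
    · rfl
    · exact add_comm _ _
  refine ⟨a, b, ⟨Nat.zero_lt_two, ha, hb, hab⟩, ?_⟩
  rcases hpair with ⟨rfl, rfl⟩ | ⟨rfl, -⟩ | ⟨rfl, rfl⟩
  · left
    rw [add_add_add_comm, ZModModule.add_self, zero_add, hρ]
  · exact absurd rfl hcd
  · right
    rw [add_add_add_comm, hρ]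
    obtain ⟨rfl, rfl⟩ | ⟨rfl, rfl⟩ : (a = c₀ ∧ b = c₁) ∨ (b = c₀ ∧ a = c₁) := by omega
    · rfl
    · rw [add_comm (η b)]

theorem add_eq_or_isExceptionalSum
    (hli : LinearIndependent (ZMod 2)
      (Sum.elim (fun a : w => η a) (fun p : labelledPairs w => ρ p)))
    {ν₀ ν₁ μ₀ μ₁ : V} (hν₀ : ν₀ ∈ gSet w η ρ) (hν₁ : ν₁ ∈ gSet w η ρ)
    (hμ₀ : μ₀ ∈ gSet w η ρ) (hμ₁ : μ₁ ∈ gSet w η ρ) (h₀ : ν₀ ≠ μ₀) (h₁ : ν₀ ≠ μ₁)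
    (h : ν₀ + ν₁ = μ₀ + μ₁) :
    (∃ a ∈ w, ∃ b ∈ w, ν₀ + ν₁ = η a + η b) ∨ ∃ a b, IsExceptionalSum w η ρ a b (ν₀ + ν₁) := by
  have hη : LinearIndepOn (ZMod 2) η w := hli.comp Sum.inl Sum.inl_injective
  have hρ : LinearIndepOn (ZMod 2) ρ (labelledPairs w) := hli.comp Sum.inr Sum.inr_injective
  have hdisj : Disjoint (span (ZMod 2) (η '' w)) (span (ZMod 2) (ρ '' labelledPairs w)) := by
    rw [Set.image_eq_range, Set.image_eq_range]
    exact (linearIndependent_sum.1 hli).2.2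
  obtain ⟨c₀, p₀, hp₀, hc₀, rfl⟩ := hν₀
  obtain ⟨c₁, p₁, hp₁, hc₁, rfl⟩ := hν₁
  obtain ⟨d₀, q₀, hq₀, hd₀, rfl⟩ := hμ₀
  obtain ⟨d₁, q₁, hq₁, hd₁, rfl⟩ := hμ₁
  have spanη {c : ℕ} {p : ℕ × ℕ × ℕ} (hp : p ∈ labelledPairs w) (hc : c = p.2.1 ∨ c = p.2.2) :
      η c ∈ span (ZMod 2) (η '' w) :=
    subset_span (Set.mem_image_of_mem η (mem_of_mem_labelledPairs hp hc))
  have spanρ {p : ℕ × ℕ × ℕ} (hp : p ∈ labelledPairs w) :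
      ρ p ∈ span (ZMod 2) (ρ '' labelledPairs w) :=
    subset_span (Set.mem_image_of_mem ρ hp)
  obtain ⟨hηeq, hρeq⟩ := Submodule.eq_and_eq_of_add_eq_add hdisj
    (add_mem (spanη hp₀ hc₀) (spanη hp₁ hc₁)) (add_mem (spanη hq₀ hd₀) (spanη hq₁ hd₁))
    (add_mem (spanρ hp₀) (spanρ hp₁)) (add_mem (spanρ hq₀) (spanρ hq₁))
    (by rw [add_add_add_comm, h, add_add_add_comm])
  by_cases hp : p₀ = p₁
  · subst hp
    left
    exact ⟨c₀, mem_of_mem_labelledPairs hp₀ hc₀, c₁, mem_of_mem_labelledPairs hp₀ hc₁,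
      by rw [add_add_add_comm, ZModModule.add_self, add_zero]⟩
  right
  rcases hρ.eq_and_eq_of_add_eq_add hp₀ hp₁ hq₀ hq₁ hρeq with ⟨hp', -⟩ | ⟨rfl, rfl⟩ | ⟨rfl, rfl⟩
  · exact absurd hp' hp
  · exact isExceptionalSum_of_add_eq_add hη hp₀ hp₁ hp hc₀ hd₀ hc₁ hd₁
      (fun hcd => h₀ (by rw [hcd])) hηeq
  · exact isExceptionalSum_of_add_eq_add hη hp₀ hp₁ hp hc₀ hd₁ hc₁ hd₀
      (fun hcd => h₁ (by rw [hcd])) (hηeq.trans (add_comm _ _))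

theorem card_le_four_of_isExceptionalSum
    (hli : LinearIndependent (ZMod 2)
      (Sum.elim (fun a : w => η a) (fun p : labelledPairs w => ρ p)))
    {U : Finset V}
    (hU : ∀ u ∈ U, ∀ t ∈ U, u ≠ t →
      (∃ a ∈ w, ∃ b ∈ w, u + t = η a + η b) ∨ ∃ a b, IsExceptionalSum w η ρ a b (u + t))
    {x y : V} (hx : x ∈ U) (hy : y ∈ U) {a b : ℕ} (hxy : IsExceptionalSum w η ρ a b (x + y)) :
    #U ≤ 4 := by
  classical
  have hab := hxy.1
  obtain ⟨χ, hχ⟩ := hli.exists_dual_apply_eq_ite (Sum.inr ⟨(0, a, b), hab⟩)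
  obtain ⟨Θ, hΘ⟩ := hli.exists_dual_apply_eq_ite (Sum.inl ⟨a, hab.2.1⟩)
  have hχη {c : ℕ} (hc : c ∈ w) : χ (η c) = 0 := by simpa using hχ (Sum.inl ⟨c, hc⟩)
  have hχρ {p : ℕ × ℕ × ℕ} (hp : p ∈ labelledPairs w) :
      χ (ρ p) = if p = (0, a, b) then 1 else 0 := by
    simpa using hχ (Sum.inr ⟨p, hp⟩)
  have hΘη {c : ℕ} (hc : c ∈ w) : Θ (η c) = if c = a then 1 else 0 := by
    simpa using hΘ (Sum.inl ⟨c, hc⟩)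
  have hχexc {c d : ℕ} {s : V} (hs : IsExceptionalSum w η ρ c d s) :
      χ s = if c = a ∧ d = b then 1 else 0 := by
    obtain ⟨hcd, hs⟩ := hs
    have h1 : (1, c, d) ∈ labelledPairs w := ⟨one_lt_two, hcd.2⟩
    rcases hs with rfl | rfl
    · simp [hχρ hcd, hχρ h1]
    · simp [hχη hcd.2.1, hχη hcd.2.2.1, hχρ hcd, hχρ h1]
  refine card_le_four_of_add_eq_or_eq χ Θ (σ := ρ (0, a, b) + ρ (1, a, b)) (τ := η a + η b)
    ?_ ?_ hx hy (by simp [hχexc hxy])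
  · simp [hΘη hab.2.1, hΘη hab.2.2.1, hab.2.2.2.ne']
  · intro u hu t ht hut h1
    rcases hU u hu t ht hut with ⟨c, hc, d, hd, he⟩ | ⟨c, d, he⟩
    · simp [he, hχη hc, hχη hd] at h1
    · obtain ⟨rfl, rfl⟩ : c = a ∧ d = b := by
        by_contra hne
        simp [hχexc he, hne] at h1
      exact he.2

end Classification

theorem stmt_19_general (n : ℕ)
    (w : Finset ℕ)
    (η : ℕ → (Fin n → ZMod 2))
    (ρ : ℕ → ℕ → ℕ → (Fin n → ZMod 2))
    (hli : LinearIndependent (ZMod 2)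
      (Sum.elim (fun a : {a : ℕ // a ∈ w} => η a.1)
        (fun p : {p : ℕ × ℕ × ℕ // p.1 < 2 ∧ p.2.1 ∈ w ∧ p.2.2 ∈ w ∧ p.2.1 < p.2.2} =>
          ρ p.1.1 p.1.2.1 p.1.2.2)))
    (g : ℕ → ℕ → ℕ → (Fin n → ZMod 2))
    (hg : ∀ i a b, a ∈ w → b ∈ w → a < b →
      g i a b = η a + ρ i a b ∧ g i b a = η b + ρ i a b)
    (G : Set (Fin n → ZMod 2))
    (hG : G = {x | ∃ i < 2, ∃ a ∈ w, ∃ b ∈ w, a < b ∧ (x = g i a b ∨ x = g i b a)})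
    (U : Finset (Fin n → ZMod 2)) (hU : 5 ≤ U.card)
    (hpairs : ∀ x ∈ U, ∀ y ∈ U, x ≠ y →
      ∃ ν0 ν1 μ0 μ1 : Fin n → ZMod 2, ν0 ∈ G ∧ ν1 ∈ G ∧ μ0 ∈ G ∧ μ1 ∈ G ∧
        ν0 ≠ ν1 ∧ ν0 ≠ μ0 ∧ ν0 ≠ μ1 ∧ ν1 ≠ μ0 ∧ ν1 ≠ μ1 ∧ μ0 ≠ μ1 ∧
        ν0 + ν1 = x + y ∧ μ0 + μ1 = x + y) :
    ∀ x ∈ U, ∀ y ∈ U, x ≠ y → ∃ a ∈ w, ∃ b ∈ w, x + y = η a + η b := by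
  set ρ' : ℕ × ℕ × ℕ → (Fin n → ZMod 2) := fun p => ρ p.1 p.2.1 p.2.2
  have hli' : LinearIndependent (ZMod 2)
      (Sum.elim (fun a : w => η a) (fun p : labelledPairs w => ρ' p)) := hli
  have hG' : G ⊆ gSet w η ρ' := by
    rw [hG]
    rintro z ⟨i, hi, a, ha, b, hb, hab, rfl | rfl⟩
    · exact ⟨a, (i, a, b), ⟨hi, ha, hb, hab⟩, Or.inl rfl, (hg i a b ha hb hab).1⟩
    · exact ⟨b, (i, a, b), ⟨hi, ha, hb, hab⟩, Or.inr rfl, (hg i a b ha hb hab).2⟩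
  have hcls : ∀ u ∈ U, ∀ t ∈ U, u ≠ t → (∃ a ∈ w, ∃ b ∈ w, u + t = η a + η b) ∨
      ∃ a b, IsExceptionalSum w η ρ' a b (u + t) := by
    intro u hu t ht hut
    obtain ⟨ν₀, ν₁, μ₀, μ₁, hν₀, hν₁, hμ₀, hμ₁, -, h₀, h₁, -, -, -, hν, hμ⟩ :=
      hpairs u hu t ht hut
    rw [← hν]
    exact add_eq_or_isExceptionalSum hli' (hG' hν₀) (hG' hν₁) (hG' hμ₀) (hG' hμ₁)
      h₀ h₁ (hν.trans hμ.symm)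
  intro x hx y hy hxy
  refine (hcls x hx y hy hxy).resolve_right ?_
  rintro ⟨a, b, hexc⟩
  have := card_le_four_of_isExceptionalSum hli' hcls hx hy hexc
  omega

/-- The combinatorial core of Claim 5.7 for `ι = 2`: if the vectors
`⟨η_a : a ∈ w⟩ ⌢ ⟨ρ_{i,a,b} : i < 2, a < b in w⟩` are linearly independent in `(𝔽₂)ⁿ`,
`gᵢ(a,b) = η_a + ρ_{i,a,b}`, `gᵢ(b,a) = η_b + ρ_{i,a,b}`, and every sum `η + ν` of distinct
elements of a set `U` with `|U| ≥ 5` can be written in two disjoint ways as a sum of two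
elements of `G = {gᵢ(a,b), gᵢ(b,a) : i < 2, a < b in w}`, then every such sum `η + ν`
equals `η_a + η_b` for some `a, b ∈ w`. -/
theorem stmt_19 (n : ℕ) (hn : 1 ≤ n)
    (w : Finset ℕ)
    (η : ℕ → (Fin n → ZMod 2))
    (ρ : ℕ → ℕ → ℕ → (Fin n → ZMod 2))
    (hli : LinearIndependent (ZMod 2)
      (Sum.elim (fun a : {a : ℕ // a ∈ w} => η a.1)
        (fun p : {p : ℕ × ℕ × ℕ // p.1 < 2 ∧ p.2.1 ∈ w ∧ p.2.2 ∈ w ∧ p.2.1 < p.2.2} =>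
          ρ p.1.1 p.1.2.1 p.1.2.2)))
    (g : ℕ → ℕ → ℕ → (Fin n → ZMod 2))
    (hg : ∀ i a b, a ∈ w → b ∈ w → a < b →
      g i a b = η a + ρ i a b ∧ g i b a = η b + ρ i a b)
    (G : Set (Fin n → ZMod 2))
    (hG : G = {x | ∃ i < 2, ∃ a ∈ w, ∃ b ∈ w, a < b ∧ (x = g i a b ∨ x = g i b a)})
    (U : Finset (Fin n → ZMod 2)) (hU : 5 ≤ U.card)
    (hpairs : ∀ x ∈ U, ∀ y ∈ U, x ≠ y →
      ∃ ν0 ν1 μ0 μ1 : Fin n → ZMod 2, ν0 ∈ G ∧ ν1 ∈ G ∧ μ0 ∈ G ∧ μ1 ∈ G ∧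
        ν0 ≠ ν1 ∧ ν0 ≠ μ0 ∧ ν0 ≠ μ1 ∧ ν1 ≠ μ0 ∧ ν1 ≠ μ1 ∧ μ0 ≠ μ1 ∧
        ν0 + ν1 = x + y ∧ μ0 + μ1 = x + y) :
    ∀ x ∈ U, ∀ y ∈ U, x ≠ y → ∃ a ∈ w, ∃ b ∈ w, x + y = η a + η b :=
  stmt_19_general n w η ρ hli g hg G hG U hU hpairs
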